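/- arXiv:1502.02462 — 2 statements merged into one kernel-verified Lean document; each statement's English description precedes it below -/
import Mathlib

section
/- Let p ∈ ℕ, p > 2, and let m : ℕ → ℝ₊ satisfy c^j(pj)! ≤ m(j) ≤ C^j(pj)! for all j and some c, C > 0. Let P(ζ) be a homogeneous polynomial of degree p on ℂⁿ with P(−i,…,−i) ≠ 0. Then the entire function F(ζ) = Σ_{j=0}^∞ P(−iζ)^j/m(j) does NOT satisfy a Paley–Wiener–Schwartz bound: there exist no constants C' > 0, N ∈ ℕ, r > 0 with |F(ζ)| ≤ C'(1+|ζ|)^N e^{r|Im ζ|} for all ζ ∈ ℂⁿ. -/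
/-!
On the diagonal, `F` becomes `f z = ∑ (z ^ p * A) ^ j / m j` with `A = P(-i, …, -i)`: an entire
function of exponential type that depends only on `z ^ p`, hence is invariant under rotation by
`2π / p`. A Paley–Wiener–Schwartz bound makes `f` polynomially bounded on the positive real axis,
hence on every ray `arg z = 2πk / p`, and Phragmén–Lindelöf in the sectors between consecutive
rays (of opening `2π / p < π`) spreads this bound over the whole plane. But along a ray where
`z ^ p * A > 0` all terms of the series are positive, so `f` outgrows every polynomial there.
-/

open Complex MvPolynomial Real

theorem MvPolynomial.IsHomogeneous.eval_smul {σ R : Type*} [CommSemiring R]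
    {φ : MvPolynomial σ R} {n : ℕ} (hφ : φ.IsHomogeneous n) (r : R) (x : σ → R) :
    eval (r • x) φ = r ^ n * eval x φ := by
  rw [eval_eq, eval_eq, Finset.mul_sum]
  refine Finset.sum_congr rfl fun d hd => ?_
  have hdeg : ∑ i ∈ d.support, d i = n := by
    rw [← hφ (mem_support_iff.mp hd), Finsupp.weight_apply, Finsupp.sum]
    simp
  simp only [Pi.smul_apply, smul_eq_mul, mul_pow, Finset.prod_mul_distrib,
    Finset.prod_pow_eq_pow_sum, hdeg]
  ring

theorem summable_pow_mul_div_factorial_mul {p : ℕ} (hp : p ≠ 0) (x : ℝ) :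
    Summable fun j => x ^ (p * j) / (p * j).factorial :=
  (Real.summable_pow_div_factorial x).comp_injective (mul_right_injective₀ hp)

theorem tsum_pow_mul_div_factorial_mul_le_exp {p : ℕ} (hp : p ≠ 0) {x : ℝ} (hx : 0 ≤ x) :
    ∑' j, x ^ (p * j) / (p * j).factorial ≤ rexp x := by
  rw [Real.exp_eq_exp_ℝ, NormedSpace.exp_eq_tsum_div]
  exact tsum_comp_le_tsum_of_inj (Real.summable_pow_div_factorial x) (fun _ => by positivity)
    (mul_right_injective₀ hp)

theorem exists_exp_mul_I_pow_mul_eq_norm (A : ℂ) {p : ℕ} (hp : p ≠ 0) :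
    ∃ θ : ℝ, cexp (θ * I) ^ p * A = ‖A‖ := by
  set φ := arg A with hφ
  refine ⟨-φ / p, ?_⟩
  conv_lhs => rw [← Complex.norm_mul_exp_arg_mul_I A, ← hφ]
  rw [← Complex.exp_nat_mul, mul_left_comm, ← Complex.exp_add]
  have : (p : ℂ) * ((-φ / p : ℝ) * I) + φ * I = 0 := by
    push_cast
    field_simp
    ring
  rw [this, Complex.exp_zero, mul_one]

/-- `F(z, …, z)`, since `P(-iz, …, -iz) = z ^ p * A` with `A = P(-i, …, -i)`. -/
noncomputable def diagonalSeries (p : ℕ) (A : ℂ) (m : ℕ → ℝ) (z : ℂ) : ℂ :=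
  ∑' j, (z ^ p * A) ^ j / (m j : ℂ)

section DiagonalSeries

variable {p : ℕ} {A : ℂ} {m : ℕ → ℝ} {c : ℝ}

theorem diagonalSeries_mul_exp_two_pi_mul_I (hp : p ≠ 0) (k : ℤ) (z : ℂ) :
    diagonalSeries p A m (z * cexp (2 * π * k / p * I)) = diagonalSeries p A m z := by
  have hω : cexp (2 * π * k / p * I) ^ p = 1 := by
    rw [← Complex.exp_nat_mul, ← Complex.exp_int_mul_two_pi_mul_I k]
    congr 1
    field_simp
  simp only [diagonalSeries, mul_pow, hω, mul_one]

variable (hc : 0 < c) (hm : ∀ j, c ^ j * (p * j).factorial ≤ m j)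
include hc hm

theorem pos_of_pow_mul_factorial_le (j : ℕ) : 0 < m j :=
  lt_of_lt_of_le (by positivity) (hm j)

theorem exists_norm_diagonalTerm_le (hp : p ≠ 0) :
    ∃ κ, 0 ≤ κ ∧ ∀ (z : ℂ) (j : ℕ),
      ‖(z ^ p * A) ^ j / (m j : ℂ)‖ ≤ (κ * ‖z‖) ^ (p * j) / (p * j).factorial := by
  set κ := max 1 (‖A‖ / c)
  have hA : ‖A‖ ≤ κ ^ p * c :=
    (div_le_iff₀ hc).mp ((le_max_right _ _).trans (le_self_pow₀ (le_max_left _ _) hp))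
  refine ⟨κ, zero_le_one.trans (le_max_left _ _), fun z j => ?_⟩
  have hmj := pos_of_pow_mul_factorial_le hc hm j
  rw [norm_div, norm_pow, norm_mul, norm_pow, Complex.norm_real, Real.norm_of_nonneg hmj.le,
    div_le_div_iff₀ hmj (by positivity)]
  calc (‖z‖ ^ p * ‖A‖) ^ j * (p * j).factorial
      ≤ (‖z‖ ^ p * (κ ^ p * c)) ^ j * (p * j).factorial := by gcongr
    _ = (κ * ‖z‖) ^ (p * j) * (c ^ j * (p * j).factorial) := by ring
    _ ≤ (κ * ‖z‖) ^ (p * j) * m j := by gcongr; exact hm j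

theorem summable_norm_diagonalTerm (hp : p ≠ 0) (z : ℂ) :
    Summable fun j => ‖(z ^ p * A) ^ j / (m j : ℂ)‖ := by
  obtain ⟨κ, -, hκ⟩ := exists_norm_diagonalTerm_le hc hm hp (A := A)
  exact .of_nonneg_of_le (fun _ => norm_nonneg _) (hκ z)
    (summable_pow_mul_div_factorial_mul hp _)

theorem exists_norm_diagonalSeries_le_exp (hp : p ≠ 0) :
    ∃ κ, ∀ z, ‖diagonalSeries p A m z‖ ≤ rexp (κ * ‖z‖) := by
  obtain ⟨κ, hκ0, hκ⟩ := exists_norm_diagonalTerm_le hc hm hp (A := A)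
  refine ⟨κ, fun z => ?_⟩
  calc ‖diagonalSeries p A m z‖ ≤ ∑' j, ‖(z ^ p * A) ^ j / (m j : ℂ)‖ :=
        norm_tsum_le_tsum_norm (summable_norm_diagonalTerm hc hm hp z)
    _ ≤ ∑' j, (κ * ‖z‖) ^ (p * j) / (p * j).factorial :=
        (summable_norm_diagonalTerm hc hm hp z).tsum_le_tsum (hκ z)
          (summable_pow_mul_div_factorial_mul hp _)
    _ ≤ rexp (κ * ‖z‖) := tsum_pow_mul_div_factorial_mul_le_exp hp (by positivity)

theorem differentiable_diagonalSeries (hp : p ≠ 0) : Differentiable ℂ (diagonalSeries p A m) := by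
  obtain ⟨κ, hκ0, hκ⟩ := exists_norm_diagonalTerm_le hc hm hp (A := A)
  intro z₀
  have hR : ‖z₀‖ < ‖z₀‖ + 1 := lt_add_one _
  refine (differentiableOn_tsum_of_summable_norm
    (summable_pow_mul_div_factorial_mul hp (κ * (‖z₀‖ + 1)))
    (fun j => ((((differentiable_pow p).mul_const A).pow j).div_const _).differentiableOn)
    Metric.isOpen_ball fun j w hw => ?_).differentiableAt
    (Metric.isOpen_ball.mem_nhds (mem_ball_zero_iff.mpr hR))
  refine (hκ w j).trans ?_
  gcongr
  exact (mem_ball_zero_iff.mp hw).le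

theorem pow_div_le_norm_diagonalSeries (hp : p ≠ 0) {ω : ℂ} (hω : ω ^ p * A = ‖A‖) {t : ℝ}
    (ht : 0 ≤ t) (J : ℕ) :
    (t ^ p * ‖A‖) ^ J / m J ≤ ‖diagonalSeries p A m (t * ω)‖ := by
  set b : ℕ → ℝ := fun j => (t ^ p * ‖A‖) ^ j / m j
  have hbase : (t * ω) ^ p * A = ((t ^ p * ‖A‖ : ℝ) : ℂ) := by
    rw [mul_pow, mul_assoc, hω]
    push_cast
    ring
  have hb : ∀ j, ((t * ω) ^ p * A) ^ j / (m j : ℂ) = (b j : ℂ) := fun j => by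
    push_cast [b, hbase]
    ring
  have hb0 : ∀ j, 0 ≤ b j := fun j =>
    div_nonneg (by positivity) (pos_of_pow_mul_factorial_le hc hm j).le
  have hsum : Summable b := by
    refine Complex.summable_ofReal.mp (Summable.of_norm ?_)
    simpa only [hb] using summable_norm_diagonalTerm hc hm hp (A := A) (t * ω)
  rw [diagonalSeries, tsum_congr hb, ← Complex.ofReal_tsum, Complex.norm_real,
    Real.norm_of_nonneg (tsum_nonneg hb0)]
  exact hsum.le_tsum J fun j _ => hb0 j

end DiagonalSeries

theorem cos_mul_one_add_exp_re_le_norm {ψ s : ℝ} {w : ℂ} (hs : s ≤ π) (hw : |w.im - ψ| ≤ s) :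
    Real.cos s * (1 + rexp w.re) ≤ ‖cexp (ψ * I) + cexp w‖ := by
  have hcos : Real.cos s ≤ Real.cos (w.im - ψ) := by
    rw [← Real.cos_abs (w.im - ψ)]
    exact Real.cos_le_cos_of_nonneg_of_le_pi (abs_nonneg _) hs hw
  have hrot : cexp (ψ * I) + cexp w = cexp (ψ * I) * (1 + cexp (w - ψ * I)) := by
    rw [mul_add, mul_one, ← Complex.exp_add]
    ring_nf
  have hre : (1 + cexp (w - ψ * I)).re = 1 + rexp w.re * Real.cos (w.im - ψ) := by
    simp [Complex.exp_re]
  calc Real.cos s * (1 + rexp w.re)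
      ≤ 1 + rexp w.re * Real.cos (w.im - ψ) := by
        nlinarith [Real.cos_le_one s, Real.exp_pos w.re]
    _ = (1 + cexp (w - ψ * I)).re := hre.symm
    _ ≤ ‖cexp (ψ * I) + cexp w‖ := by
        rw [hrot, norm_mul, Complex.norm_exp_ofReal_mul_I, one_mul]
        exact Complex.re_le_norm _

theorem exp_eq_exp_re_mul_exp_im (w : ℂ) : cexp w = (rexp w.re : ℂ) * cexp (w.im * I) := by
  rw [Complex.ofReal_exp, ← Complex.exp_add, Complex.re_add_im]

theorem norm_comp_exp_div_pow_le_of_strip {f : ℂ → ℂ} (hf : Differentiable ℂ f) {κ : ℝ}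
    (hκ : ∀ z, ‖f z‖ ≤ rexp (κ * ‖z‖)) {α β M : ℝ} (hαβ : α < β) (hβα : β - α < π) (N : ℕ)
    (hα : ∀ w : ℂ, w.im = α → ‖f (cexp w) / (cexp (↑((α + β) / 2) * I) + cexp w) ^ N‖ ≤ M)
    (hβ : ∀ w : ℂ, w.im = β → ‖f (cexp w) / (cexp (↑((α + β) / 2) * I) + cexp w) ^ N‖ ≤ M)
    {w : ℂ} (h₁ : α ≤ w.im) (h₂ : w.im ≤ β) :
    ‖f (cexp w) / (cexp (↑((α + β) / 2) * I) + cexp w) ^ N‖ ≤ M := by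
  set l := cexp (↑((α + β) / 2) * I)
  set δ := Real.cos ((β - α) / 2)
  have hδ : 0 < δ := Real.cos_pos_of_mem_Ioo ⟨by linarith, by linarith⟩
  have hden : ∀ w : ℂ, α ≤ w.im → w.im ≤ β → δ ≤ ‖l + cexp w‖ := fun w h₁ h₂ =>
    le_trans (by nlinarith [Real.exp_pos w.re])
      (cos_mul_one_add_exp_re_le_norm (by linarith) (abs_le.mpr ⟨by linarith, by linarith⟩))
  refine PhragmenLindelof.horizontal_strip (f := fun w => f (cexp w) / (l + cexp w) ^ N) ?_
    ⟨1, ?_, |κ|, ?_⟩ hα hβ h₁ h₂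
  · refine DifferentiableOn.diffContOnCl fun w hw => ?_
    rw [Complex.closure_preimage_im, closure_Ioo hαβ.ne] at hw
    exact (((hf _).comp w differentiableAt_exp).div
      ((differentiableAt_const l).add differentiableAt_exp |>.pow N)
      (pow_ne_zero _ (norm_pos_iff.mp (hδ.trans_le (hden w hw.1 hw.2))))).differentiableWithinAt
  · rwa [one_lt_div (by linarith)]
  · refine Asymptotics.IsBigO.of_bound (δ ^ N)⁻¹
      (Filter.eventually_inf_principal.mpr (.of_forall fun w hw => ?_))
    have hδw := hden w hw.1.le hw.2.le
    rw [Real.norm_of_nonneg (Real.exp_pos _).le, one_mul, norm_div, norm_pow,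
      div_le_iff₀ (pow_pos (hδ.trans_le hδw) N)]
    calc ‖f (cexp w)‖ ≤ rexp (κ * rexp w.re) := by
          simpa only [Complex.norm_exp] using hκ (cexp w)
      _ ≤ rexp (|κ| * rexp |w.re|) := Real.exp_le_exp.mpr <| mul_le_mul (le_abs_self κ)
          (Real.exp_le_exp.mpr (le_abs_self _)) (Real.exp_pos _).le (abs_nonneg κ)
      _ = (δ ^ N)⁻¹ * rexp (|κ| * rexp |w.re|) * δ ^ N := by field_simp
      _ ≤ (δ ^ N)⁻¹ * rexp (|κ| * rexp |w.re|) * ‖l + cexp w‖ ^ N := by gcongr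

theorem norm_le_of_norm_le_on_rays {f : ℂ → ℂ} (hf : Differentiable ℂ f) {κ : ℝ}
    (hκ : ∀ z, ‖f z‖ ≤ rexp (κ * ‖z‖)) {α β B : ℝ} {N : ℕ} (hαβ : α < β) (hβα : β - α < π)
    (hα : ∀ t : ℝ, 0 < t → ‖f (t * cexp (α * I))‖ ≤ B * (1 + t) ^ N)
    (hβ : ∀ t : ℝ, 0 < t → ‖f (t * cexp (β * I))‖ ≤ B * (1 + t) ^ N)
    {θ t : ℝ} (hαθ : α ≤ θ) (hθβ : θ ≤ β) (ht : 0 < t) :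
    ‖f (t * cexp (θ * I))‖ ≤ B / Real.cos ((β - α) / 2) ^ N * (1 + t) ^ N := by
  set l := cexp (↑((α + β) / 2) * I)
  set δ := Real.cos ((β - α) / 2)
  have hδ : 0 < δ := Real.cos_pos_of_mem_Ioo ⟨by linarith, by linarith⟩
  have hden : ∀ w : ℂ, α ≤ w.im → w.im ≤ β → δ * (1 + rexp w.re) ≤ ‖l + cexp w‖ :=
    fun w h₁ h₂ => cos_mul_one_add_exp_re_le_norm (by linarith)
      (abs_le.mpr ⟨by linarith, by linarith⟩)
  have hden_pos : ∀ w : ℂ, α ≤ w.im → w.im ≤ β → 0 < ‖l + cexp w‖ := fun w h₁ h₂ =>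
    (mul_pos hδ (by positivity)).trans_le (hden w h₁ h₂)
  have hB : 0 ≤ B :=
    nonneg_of_mul_nonneg_left ((norm_nonneg _).trans (hα 1 one_pos)) (by positivity)
  -- On the strip `‖l + exp w‖` is comparable to `1 + ‖exp w‖`, so dividing by its `N`-th power
  -- turns the polynomial bounds on the rays into bounds on the boundary lines.
  have hray : ∀ γ : ℝ, (∀ t : ℝ, 0 < t → ‖f (t * cexp (γ * I))‖ ≤ B * (1 + t) ^ N) →
      α ≤ γ → γ ≤ β → ∀ w : ℂ, w.im = γ → ‖f (cexp w) / (l + cexp w) ^ N‖ ≤ B / δ ^ N := by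
    intro γ hγ h₁ h₂ w hw
    have hfw := hγ _ (Real.exp_pos w.re)
    rw [← hw, ← exp_eq_exp_re_mul_exp_im] at hfw
    rw [norm_div, norm_pow,
      div_le_div_iff₀ (pow_pos (hden_pos w (hw ▸ h₁) (hw ▸ h₂)) N) (by positivity)]
    calc ‖f (cexp w)‖ * δ ^ N ≤ B * (1 + rexp w.re) ^ N * δ ^ N := by gcongr
      _ = B * (δ * (1 + rexp w.re)) ^ N := by rw [mul_pow]; ring
      _ ≤ B * ‖l + cexp w‖ ^ N := by gcongr; exact hden w (hw ▸ h₁) (hw ▸ h₂)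
  set w : ℂ := Real.log t + θ * I
  have hw : cexp w = t * cexp (θ * I) := by
    rw [Complex.exp_add, ← Complex.ofReal_exp, Real.exp_log ht]
  have hwim : w.im = θ := by simp [w]
  have hl : ‖l + t * cexp (θ * I)‖ ≤ 1 + t := by
    refine (norm_add_le _ _).trans_eq ?_
    rw [norm_mul, Complex.norm_exp_ofReal_mul_I, Complex.norm_exp_ofReal_mul_I,
      Complex.norm_real, Real.norm_of_nonneg ht.le, mul_one]
  have hH := norm_comp_exp_div_pow_le_of_strip hf hκ hαβ hβα N (hray α hα le_rfl hαβ.le)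
    (hray β hβ hαβ.le le_rfl) (hwim ▸ hαθ) (hwim ▸ hθβ)
  rw [norm_div, norm_pow, div_le_iff₀ (pow_pos (hden_pos w (hwim ▸ hαθ) (hwim ▸ hθβ)) N),
    hw] at hH
  exact hH.trans (by gcongr)

theorem not_forall_mul_pow_le_mul_one_add_pow {k N : ℕ} (hNk : N < k) {a B : ℝ} (ha : 0 < a) :
    ¬ ∀ t : ℝ, 0 < t → a * t ^ k ≤ B * (1 + t) ^ N := by
  intro h
  set t := max 1 (2 ^ N * B / a + 1)
  have ht : 1 ≤ t := le_max_left _ _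
  have htB : 2 ^ N * B / a < t := (lt_add_one _).trans_le (le_max_right _ _)
  have hB : 0 < B := pos_of_mul_pos_left
    ((by positivity : 0 < a * t ^ k).trans_le (h t (by positivity))) (by positivity)
  have : a * t * t ^ N ≤ 2 ^ N * B * t ^ N :=
    calc a * t * t ^ N = a * t ^ (N + 1) := by ring
      _ ≤ a * t ^ k := by gcongr a * ?_; exact pow_le_pow_right₀ ht hNk
      _ ≤ B * (1 + t) ^ N := h t (by positivity)
      _ ≤ B * (2 * t) ^ N := by gcongr; linarith
      _ = 2 ^ N * B * t ^ N := by ring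
  have := le_of_mul_le_mul_right this (by positivity)
  rw [div_lt_iff₀ ha] at htB
  linarith

theorem norm_le_of_rotation_invariant {f : ℂ → ℂ} (hf : Differentiable ℂ f) {κ : ℝ}
    (hκ : ∀ z, ‖f z‖ ≤ rexp (κ * ‖z‖)) {p : ℕ} (hp : 2 < p)
    (hrot : ∀ (k : ℤ) (z : ℂ), f (z * cexp (2 * π * k / p * I)) = f z)
    {B : ℝ} {N : ℕ} (hreal : ∀ t : ℝ, 0 < t → ‖f t‖ ≤ B * (1 + t) ^ N) (θ : ℝ) {t : ℝ}
    (ht : 0 < t) :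
    ‖f (t * cexp (θ * I))‖ ≤ B / Real.cos (π / p) ^ N * (1 + t) ^ N := by
  have hp0 : (0 : ℝ) < p := by positivity
  have hray : ∀ (k : ℤ) (t : ℝ), 0 < t →
      ‖f (t * cexp ((2 * π * k / p : ℝ) * I))‖ ≤ B * (1 + t) ^ N := fun k t ht => by
    push_cast
    rw [hrot]
    exact hreal t ht
  set k := ⌊θ * p / (2 * π)⌋
  have hk₁ : (k : ℝ) ≤ θ * p / (2 * π) := Int.floor_le _
  have hk₂ : θ * p / (2 * π) < k + 1 := Int.lt_floor_add_one _
  have hsector := norm_le_of_norm_le_on_rays hf hκ (α := 2 * π * k / p)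
    (β := 2 * π * (k + 1 : ℤ) / p) ?_ ?_ (hray k) (hray (k + 1)) (θ := θ) ?_ ?_ ht
  · convert hsector using 5
    push_cast
    ring
  · push_cast
    gcongr
    linarith
  · push_cast
    rw [← sub_div, div_lt_iff₀ hp0]
    have : (3 : ℝ) ≤ p := by exact_mod_cast hp
    nlinarith [Real.pi_pos]
  · rw [div_le_iff₀ hp0]
    rw [le_div_iff₀ (by positivity)] at hk₁
    linarith
  · push_cast
    rw [le_div_iff₀ hp0]
    rw [div_lt_iff₀ (by positivity)] at hk₂
    linarith

theorem one_add_sqrt_sum_norm_const_le (n : ℕ) {t : ℝ} (ht : 0 ≤ t) :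
    1 + √(∑ _k : Fin n, ‖(t : ℂ)‖ ^ 2) ≤ (1 + √n) * (1 + t) := by
  rw [Finset.sum_const, Finset.card_univ, Fintype.card_fin, nsmul_eq_mul, Complex.norm_real,
    Real.norm_of_nonneg ht, Real.sqrt_mul' _ (sq_nonneg t), Real.sqrt_sq ht]
  nlinarith [Real.sqrt_nonneg n]

theorem stmt12_general {n p : ℕ} (hp : 2 < p) (P : MvPolynomial (Fin n) ℂ)
    (hP : P.IsHomogeneous p)
    (hP0 : MvPolynomial.eval (fun _ : Fin n => -Complex.I) P ≠ 0)
    (m : ℕ → ℝ)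
    (c C : ℝ) (hc : 0 < c)
    (hm : ∀ j : ℕ, c ^ j * (Nat.factorial (p * j) : ℝ) ≤ m j ∧
      m j ≤ C ^ j * (Nat.factorial (p * j) : ℝ)) :
    ¬ ∃ (C' : ℝ) (N : ℕ) (r : ℝ), 0 < C' ∧ 0 < r ∧
      ∀ ζ : Fin n → ℂ,
        ‖(∑' j : ℕ,
            (MvPolynomial.eval (fun k => -Complex.I * ζ k) P) ^ j / (m j : ℂ))‖ ≤
          C' * (1 + Real.sqrt (∑ k : Fin n, ‖ζ k‖ ^ 2)) ^ N *
            Real.exp (r * Real.sqrt (∑ k : Fin n, (ζ k).im ^ 2)) := by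
  rintro ⟨C', N, r, hC', -, hF⟩
  set A := eval (fun _ : Fin n => -I) P
  have hp0 : p ≠ 0 := by omega
  have hlow : ∀ j, c ^ j * (p * j).factorial ≤ m j := fun j => (hm j).1
  have hdiag : ∀ z : ℂ, eval (fun _ : Fin n => -I * z) P = z ^ p * A := fun z => by
    rw [← hP.eval_smul]
    congr
    funext
    simp [mul_comm]
  have hreal : ∀ t : ℝ, 0 < t →
      ‖diagonalSeries p A m t‖ ≤ C' * (1 + √n) ^ N * (1 + t) ^ N := fun t ht => by
    have h := hF fun _ => (t : ℂ)
    simp only [hdiag, Complex.ofReal_im, ne_eq, OfNat.ofNat_ne_zero, not_false_eq_true, zero_pow,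
      Finset.sum_const_zero, Real.sqrt_zero, mul_zero, Real.exp_zero, mul_one] at h
    refine h.trans ?_
    rw [mul_assoc, ← mul_pow]
    gcongr
    exact one_add_sqrt_sum_norm_const_le n ht.le
  obtain ⟨κ, hκ⟩ := exists_norm_diagonalSeries_le_exp hc hlow hp0 (A := A)
  obtain ⟨θ, hθ⟩ := exists_exp_mul_I_pow_mul_eq_norm A hp0
  refine not_forall_mul_pow_le_mul_one_add_pow (k := p * (N + 1)) (N := N)
    (a := ‖A‖ ^ (N + 1) / m (N + 1))
    (B := C' * (1 + √n) ^ N / Real.cos (π / p) ^ N) ?_ ?_ fun t ht => ?_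
  · nlinarith
  · exact div_pos (pow_pos (norm_pos_iff.mpr hP0) _) (pos_of_pow_mul_factorial_le hc hlow _)
  calc ‖A‖ ^ (N + 1) / m (N + 1) * t ^ (p * (N + 1)) = (t ^ p * ‖A‖) ^ (N + 1) / m (N + 1) := by
        ring
    _ ≤ ‖diagonalSeries p A m (t * cexp (θ * I))‖ :=
        pow_div_le_norm_diagonalSeries hc hlow hp0 hθ ht.le _
    _ ≤ _ := norm_le_of_rotation_invariant (differentiable_diagonalSeries hc hlow hp0) hκ hp
        (diagonalSeries_mul_exp_two_pi_mul_I hp0) hreal θ ht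

/-- For `p > 2`, a homogeneous polynomial `P` of degree `p` with `P(-i,…,-i) ≠ 0`,
and `m` with `c^j (pj)! ≤ m(j) ≤ C^j (pj)!`, the entire function
`F(ζ) = Σ_j P(-iζ)^j/m(j)` satisfies no Paley–Wiener–Schwartz bound. -/
theorem stmt12 {n p : ℕ} (hp : 2 < p) (P : MvPolynomial (Fin n) ℂ)
    (hP : P.IsHomogeneous p)
    (hP0 : MvPolynomial.eval (fun _ : Fin n => -Complex.I) P ≠ 0)
    (m : ℕ → ℝ) (hmpos : ∀ j, 0 < m j)
    (c C : ℝ) (hc : 0 < c) (hC : 0 < C)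
    (hm : ∀ j : ℕ, c ^ j * (Nat.factorial (p * j) : ℝ) ≤ m j ∧
      m j ≤ C ^ j * (Nat.factorial (p * j) : ℝ)) :
    ¬ ∃ (C' : ℝ) (N : ℕ) (r : ℝ), 0 < C' ∧ 0 < r ∧
      ∀ ζ : Fin n → ℂ,
        ‖(∑' j : ℕ,
            (MvPolynomial.eval (fun k => -Complex.I * ζ k) P) ^ j / (m j : ℂ))‖ ≤
          C' * (1 + Real.sqrt (∑ k : Fin n, ‖ζ k‖ ^ 2)) ^ N *
            Real.exp (r * Real.sqrt (∑ k : Fin n, (ζ k).im ^ 2)) :=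
  stmt12_general hp P hP hP0 m c C hc hm
end

section
/- Consequently (Theorem on higher-order operators): if p > 2, P(∂_z) is a homogeneous constant-coefficient operator of order p with P(−i,…,−i) ≠ 0, and m is a function of order p, then there is no finite complex Borel measure μ of compact support on ℝⁿ such that ∫_{ℝⁿ} φ(z+ty) dμ(y) = Σ_{j=0}^∞ (P^j(∂_z)φ)(z) t^{pj}/m(j) holds for all polynomials φ, all z and all small t. -/
open MeasureTheory MvPolynomial

/-- The monomial derivative `∂^α` on polynomials. -/
noncomputable def mderiv {n : ℕ} (α : Fin n →₀ ℕ) (φ : MvPolynomial (Fin n) ℂ) :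
    MvPolynomial (Fin n) ℂ :=
  (List.finRange n).foldr (fun k ψ => (fun χ => MvPolynomial.pderiv k χ)^[α k] ψ) φ

/-- The constant-coefficient operator `P(∂_z)` on polynomials, for a polynomial symbol `P`. -/
noncomputable def polyOp {n : ℕ} (P : MvPolynomial (Fin n) ℂ)
    (φ : MvPolynomial (Fin n) ℂ) : MvPolynomial (Fin n) ℂ :=
  ∑ α ∈ P.support, P.coeff α • mderiv α φ

/-- The integral of a complex-valued function against the complex measure
`μ₁ - μ₂ + i(μ₃ - μ₄)`. -/
noncomputable def cInt {n : ℕ} (μ₁ μ₂ μ₃ μ₄ : Measure (Fin n → ℝ))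
    (f : (Fin n → ℝ) → ℂ) : ℂ :=
  (∫ y, f y ∂μ₁) - (∫ y, f y ∂μ₂) + Complex.I * ((∫ y, f y ∂μ₃) - (∫ y, f y ∂μ₄))

/-!
Testing the identity on `φ = (z₁ + ⋯ + zₙ)^N` at `z = 0`: since `P` is homogeneous of degree
`p`, `P(∂)^j φ` vanishes at `0` unless `pj = N`, so the moments `M_N = ∫ (y₁ + ⋯ + yₙ)^N dμ`
vanish unless `p ∣ N`, while `M_p = P(1,…,1) p! / m(1) ≠ 0`.
The Laplace transform `H(ζ) = ∫ exp (ζ (y₁ + ⋯ + yₙ)) dμ = ∑ M_N ζ^N / N!` is then an entire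
function of exponential type which is invariant under rotation by `2π/p` and bounded on the
imaginary axis. As `2π/p < π`, the Phragmén–Lindelöf principle on the sectors between consecutive
rotated copies of the imaginary axis bounds `H` everywhere, so `H` is constant by Liouville's
theorem, contradicting `M_p ≠ 0`.
-/

noncomputable def sumX (n : ℕ) : MvPolynomial (Fin n) ℂ := ∑ k, X k

lemma Nat.descFactorial_add (N a b : ℕ) :
    N.descFactorial (a + b) = N.descFactorial a * (N - a).descFactorial b := by
  rw [← Nat.descFactorial_mul_descFactorial (Nat.le_add_right a b), Nat.add_sub_cancel_left,
    Nat.mul_comm]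

lemma MvPolynomial.IsHomogeneous.degree_eq {σ R : Type*} [CommSemiring R]
    {φ : MvPolynomial σ R} {m : ℕ} (hφ : φ.IsHomogeneous m) {α : σ →₀ ℕ}
    (hα : α ∈ φ.support) : α.degree = m := by
  rw [Finsupp.degree_eq_weight_one]
  exact hφ (mem_support_iff.mp hα)

lemma MvPolynomial.IsHomogeneous.eval_const {σ R : Type*} [CommSemiring R]
    {φ : MvPolynomial σ R} {m : ℕ} (hφ : φ.IsHomogeneous m) (c : R) :
    eval (fun _ => c) φ = c ^ m * eval (fun _ => 1) φ := by
  simp only [eval_eq, Finset.mul_sum, Finset.prod_pow_eq_pow_sum, one_pow, Finset.prod_const_one]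
  refine Finset.sum_congr rfl fun α hα => ?_
  rw [← Finsupp.degree_apply, hφ.degree_eq hα]
  ring

section sumX

variable {n : ℕ}

lemma pderiv_sumX (k : Fin n) : pderiv k (sumX n) = 1 := by
  classical
  simp [sumX, pderiv_X, Pi.single_apply]

lemma eval_sumX_pow (x : Fin n → ℂ) (N : ℕ) : eval x (sumX n ^ N) = (∑ k, x k) ^ N := by
  simp [sumX]

lemma iterate_pderiv_smul_sumX_pow (k : Fin n) (a M : ℕ) (c : ℂ) :
    (fun χ => pderiv k χ)^[a] (c • sumX n ^ M)
      = (c * M.descFactorial a) • sumX n ^ (M - a) := by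
  induction a with
  | zero => simp
  | succ a ih =>
    rw [Function.iterate_succ_apply', ih, Derivation.map_smul, Derivation.leibniz_pow,
      pderiv_sumX, smul_eq_mul, mul_one, ← Nat.cast_smul_eq_nsmul ℂ, smul_smul,
      Nat.descFactorial_succ, Nat.sub_sub]
    push_cast
    ring_nf

lemma foldr_iterate_pderiv_smul_sumX_pow (α : Fin n →₀ ℕ) (l : List (Fin n)) (M : ℕ) (c : ℂ) :
    l.foldr (fun k ψ => (fun χ => pderiv k χ)^[α k] ψ) (c • sumX n ^ M)
      = (c * M.descFactorial (l.map α).sum) • sumX n ^ (M - (l.map α).sum) := by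
  induction l with
  | nil => simp
  | cons k l ih =>
    rw [List.foldr_cons, ih, iterate_pderiv_smul_sumX_pow, List.map_cons, List.sum_cons,
      Nat.add_comm (α k), Nat.descFactorial_add, Nat.sub_sub]
    push_cast
    ring_nf

lemma mderiv_smul_sumX_pow (α : Fin n →₀ ℕ) (M : ℕ) (c : ℂ) :
    mderiv α (c • sumX n ^ M) = (c * M.descFactorial α.degree) • sumX n ^ (M - α.degree) := by
  rw [mderiv, foldr_iterate_pderiv_smul_sumX_pow, ← Fin.sum_univ_def, Finsupp.degree_eq_sum]

variable {p : ℕ} {P : MvPolynomial (Fin n) ℂ}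

lemma polyOp_smul_sumX_pow (hP : P.IsHomogeneous p) (M : ℕ) (c : ℂ) :
    polyOp P (c • sumX n ^ M)
      = (c * eval (fun _ => 1) P * M.descFactorial p) • sumX n ^ (M - p) := by
  have hterm : ∀ α ∈ P.support, P.coeff α • mderiv α (c • sumX n ^ M)
      = (c * P.coeff α * M.descFactorial p) • sumX n ^ (M - p) := fun α hα => by
    rw [mderiv_smul_sumX_pow, hP.degree_eq hα, smul_smul]
    ring_nf
  rw [polyOp, Finset.sum_congr rfl hterm, ← Finset.sum_smul, eval_eq']
  congr 1
  simp [Finset.mul_sum, Finset.sum_mul]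

lemma iterate_polyOp_sumX_pow (hP : P.IsHomogeneous p) (N j : ℕ) :
    (polyOp P)^[j] (sumX n ^ N)
      = (eval (fun _ => 1) P ^ j * N.descFactorial (p * j)) • sumX n ^ (N - p * j) := by
  induction j with
  | zero => simp
  | succ j ih =>
    rw [Function.iterate_succ_apply', ih, polyOp_smul_sumX_pow hP, Nat.mul_succ,
      Nat.descFactorial_add, Nat.sub_sub]
    push_cast
    ring_nf

lemma eval_zero_iterate_polyOp_sumX_pow (hP : P.IsHomogeneous p) (N j : ℕ) :
    eval 0 ((polyOp P)^[j] (sumX n ^ N))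
      = if p * j = N then eval (fun _ => 1) P ^ j * N.factorial else 0 := by
  rw [iterate_polyOp_sumX_pow hP, smul_eval, eval_sumX_pow]
  simp only [Pi.zero_apply, Finset.sum_const_zero]
  split_ifs with h
  · simp [← h, Nat.descFactorial_self]
  · rcases Nat.lt_or_gt_of_ne h with hlt | hgt
    · simp [zero_pow (Nat.sub_ne_zero_of_lt hlt)]
    · simp [Nat.descFactorial_eq_zero_iff_lt.mpr hgt]

lemma hasSum_eval_zero_iterate_polyOp_sumX_pow (hP : P.IsHomogeneous p) (hp : p ≠ 0)
    (m : ℕ → ℝ) (t : ℂ) (N : ℕ) :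
    HasSum (fun j => eval 0 ((polyOp P)^[j] (sumX n ^ N)) * t ^ (p * j) / (m j : ℂ))
      (if p ∣ N then eval (fun _ => 1) P ^ (N / p) * N.factorial * t ^ N / m (N / p)
        else 0) := by
  simp_rw [eval_zero_iterate_polyOp_sumX_pow hP]
  split_ifs with hN
  · obtain ⟨k, rfl⟩ := hN
    convert hasSum_single k fun j hj => ?_ using 1
    · simp [Nat.mul_div_cancel_left k (Nat.pos_of_ne_zero hp)]
    · simp [hp, hj]
  · convert hasSum_zero with j
    rw [if_neg fun h => hN ⟨j, h.symm⟩, zero_mul, zero_div]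

end sumX

section PhragmenLindelof

open Complex Filter Asymptotics Real

theorem norm_le_of_periodic_of_bounded_on_horizontal_line {f : ℂ → ℂ}
    (hf : Differentiable ℂ f) {T a A S B : ℝ} (hT : 0 < T) (hTπ : T < π)
    (hper : Function.Periodic f (T * I)) (hgrowth : ∀ w, ‖f w‖ ≤ A * rexp (S * rexp w.re))
    (hline : ∀ x : ℝ, ‖f (x + a * I)‖ ≤ B) (w : ℂ) : ‖f w‖ ≤ B := by
  have hA : 0 ≤ A := nonneg_of_mul_nonneg_left ((norm_nonneg _).trans (hgrowth 0)) (exp_pos _)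
  have hO : f =O[⊤] fun w => rexp (max S 0 * rexp (1 * |w.re|)) := by
    refine IsBigO.of_bound A (Eventually.of_forall fun w => ?_)
    rw [Real.norm_of_nonneg (exp_pos _).le, one_mul]
    exact (hgrowth w).trans (by gcongr; exacts [le_max_left _ _, le_abs_self _])
  have hbottom : ∀ z : ℂ, z.im = a → ‖f z‖ ≤ B := fun z hz => by
    simpa [← hz] using hline z.re
  -- the strip `a ≤ Im ≤ a + T` has width `T < π`, which is what allows growth `exp (c e^{|Re|})`
  have hstrip : ∀ z : ℂ, a ≤ z.im → z.im ≤ a + T → ‖f z‖ ≤ B := fun z h₁ h₂ =>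
    PhragmenLindelof.horizontal_strip hf.diffContOnCl
      ⟨1, by rwa [add_sub_cancel_left, lt_div_iff₀ hT, one_mul], max S 0, hO.mono le_top⟩
      hbottom (fun z hz => by
        rw [← sub_add_cancel z (T * I), hper]
        exact hbottom _ (by simp [hz])) h₁ h₂
  set k := toIcoDiv hT a w.im
  have him : (w - k * (T * I)).im = toIcoMod hT a w.im := by
    rw [← self_sub_toIcoDiv_zsmul]
    simp [k]
  obtain ⟨h₁, h₂⟩ := toIcoMod_mem_Ico hT a w.im
  rw [← hper.sub_int_mul_eq k]
  exact hstrip _ (him ▸ h₁) (him ▸ h₂.le)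

theorem norm_le_of_rotation_invariant_of_bounded_on_imaginary_axis {H : ℂ → ℂ}
    (hH : Differentiable ℂ H) {T A S B : ℝ} (hT : 0 < T) (hTπ : T < π)
    (hrot : ∀ ζ, H (cexp (T * I) * ζ) = H ζ) (hgrowth : ∀ ζ, ‖H ζ‖ ≤ A * rexp (S * ‖ζ‖))
    (himag : ∀ x : ℝ, ‖H (x * I)‖ ≤ B) (ζ : ℂ) : ‖H ζ‖ ≤ B := by
  rcases eq_or_ne ζ 0 with rfl | hζ
  · simpa using himag 0
  -- in the coordinate `w = log ζ` the rotation becomes the translation by `T i`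
  -- and the imaginary axis becomes the line `Im w = π / 2`
  rw [← exp_log hζ]
  refine norm_le_of_periodic_of_bounded_on_horizontal_line (hH.comp differentiable_exp) hT hTπ
    (a := π / 2) (A := A) (S := S) (fun w => ?_) (fun w => ?_) (fun x => ?_) (log ζ)
  · rw [Function.comp_apply, Complex.exp_add, mul_comm, hrot, Function.comp_apply]
  · simpa [norm_exp] using hgrowth (cexp w)
  · simpa [Complex.exp_add, exp_pi_div_two_mul_I, ← ofReal_exp] using himag (rexp x)

end PhragmenLindelof

section PowerSeries

open Complex Real

lemma hasFPowerSeriesOnBall_ofScalars_of_forall_hasSum {c : ℕ → ℂ} {H : ℂ → ℂ}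
    (hH : ∀ ζ, HasSum (fun N => ζ ^ N * c N) (H ζ)) :
    HasFPowerSeriesOnBall H (FormalMultilinearSeries.ofScalars ℂ c) 0 ⊤ := by
  refine ⟨(ENNReal.eq_top_of_forall_nnreal_le fun r => ?_).ge, ENNReal.zero_lt_top,
    fun {ζ} _ => by simpa [FormalMultilinearSeries.ofScalars_apply_eq] using hH ζ⟩
  refine FormalMultilinearSeries.le_radius_of_tendsto _ (l := 0) ?_
  simpa [mul_comm] using (hH r).summable.tendsto_atTop_zero.norm

lemma HasFPowerSeriesAt.eq_zero_of_differentiable_of_bounded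
    {q : FormalMultilinearSeries ℂ ℂ ℂ} {H : ℂ → ℂ} (hH : HasFPowerSeriesAt H q 0)
    (hdiff : Differentiable ℂ H) {B : ℝ} (hB : ∀ ζ, ‖H ζ‖ ≤ B) {N : ℕ} (hN : N ≠ 0) :
    q N = 0 := by
  have hconst : ∀ ζ, H ζ = H 0 := fun ζ => hdiff.apply_eq_apply_of_bounded
    (isBounded_iff_forall_norm_le.mpr ⟨B, by rintro _ ⟨ζ, rfl⟩; exact hB ζ⟩) ζ 0
  rw [(hH.congr (Filter.Eventually.of_forall hconst)).eq_formalMultilinearSeries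
    hasFPowerSeriesAt_const, constFormalMultilinearSeries_apply_of_nonzero hN]

theorem eq_zero_of_expGenFun_bounded_on_imaginary_axis {p : ℕ} (hp : 2 < p) {a : ℕ → ℂ}
    {K S B : ℝ} (ha : ∀ N, ‖a N‖ ≤ S ^ N * K) (ha_dvd : ∀ N, ¬ p ∣ N → a N = 0) {H : ℂ → ℂ}
    (hH : ∀ ζ, HasSum (fun N => ζ ^ N / N.factorial * a N) (H ζ))
    (himag : ∀ x : ℝ, ‖H (x * I)‖ ≤ B) {N : ℕ} (hN : N ≠ 0) : a N = 0 := by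
  have hseries := hasFPowerSeriesOnBall_ofScalars_of_forall_hasSum
    (c := fun N => a N / N.factorial) fun ζ => by
      convert hH ζ using 1
      ext N
      ring
  have hdiff : Differentiable ℂ H := by
    simpa [Metric.eball_top, differentiableOn_univ] using hseries.differentiableOn
  have hgrowth : ∀ ζ, ‖H ζ‖ ≤ K * rexp (S * ‖ζ‖) := fun ζ => by
    refine (hH ζ).norm_le_of_bounded
      (by simpa [← Real.exp_eq_exp_ℝ] using
        (NormedSpace.expSeries_div_hasSum_exp (S * ‖ζ‖)).mul_left K) fun N => ?_
    calc ‖ζ ^ N / N.factorial * a N‖ = ‖ζ‖ ^ N / N.factorial * ‖a N‖ := by simp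
      _ ≤ ‖ζ‖ ^ N / N.factorial * (S ^ N * K) := by gcongr; exact ha N
      _ = K * ((S * ‖ζ‖) ^ N / N.factorial) := by ring
  have hrot : ∀ ζ, H (cexp (↑(2 * π / p) * I) * ζ) = H ζ := fun ζ => by
    refine (hH _).unique ?_
    convert hH ζ using 2 with N
    by_cases hpN : p ∣ N
    · obtain ⟨k, rfl⟩ := hpN
      have hpk : ((p * k : ℕ) : ℂ) * (↑(2 * π / p) * I) = k * (2 * π * I) := by
        have : (p : ℂ) ≠ 0 := by exact_mod_cast (by omega : p ≠ 0)
        push_cast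
        field_simp
      rw [mul_pow, ← Complex.exp_nat_mul, hpk, exp_nat_mul_two_pi_mul_I, one_mul]
    · simp [ha_dvd N hpN]
  have hTπ : 2 * π / p < π := by
    rw [div_lt_iff₀ (by positivity)]
    linarith [mul_lt_mul_of_pos_left (by exact_mod_cast hp : (2 : ℝ) < p) pi_pos]
  have hbdd := norm_le_of_rotation_invariant_of_bounded_on_imaginary_axis
    hdiff (by positivity) hTπ hrot hgrowth himag
  simpa [FormalMultilinearSeries.ofScalars_eq_zero, Nat.factorial_ne_zero] using
    hseries.hasFPowerSeriesAt.eq_zero_of_differentiable_of_bounded hdiff hbdd hN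

end PowerSeries

section SingleMeasure

open ProbabilityTheory Complex

variable {Ω : Type*} [MeasurableSpace Ω] {μ : Measure Ω} {X : Ω → ℝ}

lemma hasSum_complexMGF_of_ae_abs_le [IsFiniteMeasure μ] (hX : AEMeasurable X μ) {S : ℝ}
    (hS : ∀ᵐ ω ∂μ, |X ω| ≤ S) (z : ℂ) :
    HasSum (fun N => z ^ N / N.factorial * ∫ ω, (X ω : ℂ) ^ N ∂μ) (complexMGF X μ z) := by
  set F : ℕ → Ω → ℂ := fun N ω => (z * X ω) ^ N / N.factorial
  have hF_le : ∀ N, ∀ᵐ ω ∂μ, ‖F N ω‖ ≤ (‖z‖ * S) ^ N / N.factorial := fun N => by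
    filter_upwards [hS] with ω hω
    simp only [F, norm_div, norm_pow, norm_mul, norm_real, Real.norm_eq_abs, norm_natCast]
    gcongr
  have hF_int : ∀ N, Integrable (F N) μ := fun N => by
    refine Integrable.of_bound ?_ _ (hF_le N)
    fun_prop
  have hsum : Summable fun N => ∫ ω, ‖F N ω‖ ∂μ := by
    refine Summable.of_nonneg_of_le (fun N => integral_nonneg fun _ => norm_nonneg _)
      (fun N => (Real.le_norm_self _).trans (norm_integral_le_of_norm_le_const
        (C := (‖z‖ * S) ^ N / N.factorial) (by simpa using hF_le N)))
      ((Real.summable_pow_div_factorial (‖z‖ * S)).mul_right (μ.real Set.univ))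
  have hexp : ∀ ω, ∑' N, F N ω = cexp (z * X ω) := fun ω => by
    rw [exp_eq_exp_ℂ, (NormedSpace.expSeries_div_hasSum_exp _).tsum_eq]
  have hterm : ∀ N, ∫ ω, F N ω ∂μ = z ^ N / N.factorial * ∫ ω, (X ω : ℂ) ^ N ∂μ := fun N => by
    rw [← integral_const_mul]
    congr 1 with ω
    simp only [F]
    ring
  have h := hasSum_integral_of_summable_integral_norm hF_int hsum
  simp only [hterm, hexp] at h
  exact h

lemma norm_integral_pow_le_of_ae_abs_le [IsFiniteMeasure μ] {S : ℝ} (hS : ∀ᵐ ω ∂μ, |X ω| ≤ S)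
    (N : ℕ) : ‖∫ ω, (X ω : ℂ) ^ N ∂μ‖ ≤ S ^ N * μ.real Set.univ :=
  norm_integral_le_of_norm_le_const <| hS.mono fun ω hω => by
    simpa using pow_le_pow_left₀ (abs_nonneg _) hω N

-- the factor `1` matches the shape of the hypotheses of `norm_cInt_le`
lemma norm_complexMGF_mul_I_le (hX : AEMeasurable X μ) (x : ℝ) :
    ‖complexMGF X μ (x * I)‖ ≤ 1 * μ.real Set.univ := by
  rw [one_mul, complexMGF_mul_I hX]
  refine (norm_charFun_le x).trans_eq ?_
  rw [measureReal_def, measureReal_def, Measure.map_apply_of_aemeasurable hX MeasurableSet.univ,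
    Set.preimage_univ]

end SingleMeasure

section ComplexMeasure

variable {n : ℕ} {μ₁ μ₂ μ₃ μ₄ : Measure (Fin n → ℝ)}

lemma cInt_const_mul (c : ℂ) (f : (Fin n → ℝ) → ℂ) :
    cInt μ₁ μ₂ μ₃ μ₄ (fun y => c * f y) = c * cInt μ₁ μ₂ μ₃ μ₄ f := by
  simp only [cInt, integral_const_mul]
  ring

lemma hasSum_mul_cInt {c : ℕ → ℂ} {F : ℕ → (Fin n → ℝ) → ℂ} {f : (Fin n → ℝ) → ℂ}
    (h₁ : HasSum (fun N => c N * ∫ y, F N y ∂μ₁) (∫ y, f y ∂μ₁))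
    (h₂ : HasSum (fun N => c N * ∫ y, F N y ∂μ₂) (∫ y, f y ∂μ₂))
    (h₃ : HasSum (fun N => c N * ∫ y, F N y ∂μ₃) (∫ y, f y ∂μ₃))
    (h₄ : HasSum (fun N => c N * ∫ y, F N y ∂μ₄) (∫ y, f y ∂μ₄)) :
    HasSum (fun N => c N * cInt μ₁ μ₂ μ₃ μ₄ (F N)) (cInt μ₁ μ₂ μ₃ μ₄ f) := by
  have h := (h₁.sub h₂).add ((h₃.sub h₄).mul_left Complex.I)
  simp only [← mul_sub, ← mul_add, mul_left_comm Complex.I (c _)] at h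
  exact h

lemma norm_cInt_le {f : (Fin n → ℝ) → ℂ} {D : ℝ}
    (h₁ : ‖∫ y, f y ∂μ₁‖ ≤ D * μ₁.real Set.univ) (h₂ : ‖∫ y, f y ∂μ₂‖ ≤ D * μ₂.real Set.univ)
    (h₃ : ‖∫ y, f y ∂μ₃‖ ≤ D * μ₃.real Set.univ) (h₄ : ‖∫ y, f y ∂μ₄‖ ≤ D * μ₄.real Set.univ) :
    ‖cInt μ₁ μ₂ μ₃ μ₄ f‖ ≤
      D * (μ₁.real Set.univ + μ₂.real Set.univ + μ₃.real Set.univ + μ₄.real Set.univ) := by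
  calc ‖cInt μ₁ μ₂ μ₃ μ₄ f‖
      ≤ ‖∫ y, f y ∂μ₁‖ + ‖∫ y, f y ∂μ₂‖ + (‖∫ y, f y ∂μ₃‖ + ‖∫ y, f y ∂μ₄‖) := by
        refine (norm_add_le _ _).trans (add_le_add (norm_sub_le _ _) ?_)
        rw [norm_mul, Complex.norm_I, one_mul]
        exact norm_sub_le _ _
    _ ≤ _ := by linarith

theorem cInt_pow_eq_zero_of_not_dvd [IsFiniteMeasure μ₁] [IsFiniteMeasure μ₂]
    [IsFiniteMeasure μ₃] [IsFiniteMeasure μ₄] {g : (Fin n → ℝ) → ℝ} (hg : Measurable g)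
    {S : ℝ} (h₁ : ∀ᵐ y ∂μ₁, |g y| ≤ S) (h₂ : ∀ᵐ y ∂μ₂, |g y| ≤ S)
    (h₃ : ∀ᵐ y ∂μ₃, |g y| ≤ S) (h₄ : ∀ᵐ y ∂μ₄, |g y| ≤ S) {p : ℕ} (hp : 2 < p)
    (hdvd : ∀ N, ¬ p ∣ N → cInt μ₁ μ₂ μ₃ μ₄ (fun y => (g y : ℂ) ^ N) = 0) {N : ℕ}
    (hN : N ≠ 0) : cInt μ₁ μ₂ μ₃ μ₄ (fun y => (g y : ℂ) ^ N) = 0 := by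
  set K := μ₁.real Set.univ + μ₂.real Set.univ + μ₃.real Set.univ + μ₄.real Set.univ
  refine eq_zero_of_expGenFun_bounded_on_imaginary_axis hp (S := S) (K := K) (B := 1 * K)
    (fun N => ?_) hdvd (H := fun ζ => cInt μ₁ μ₂ μ₃ μ₄ fun y => Complex.exp (ζ * g y))
    (fun ζ => ?_) (fun x => ?_) hN
  · exact norm_cInt_le (norm_integral_pow_le_of_ae_abs_le h₁ N)
      (norm_integral_pow_le_of_ae_abs_le h₂ N) (norm_integral_pow_le_of_ae_abs_le h₃ N)
      (norm_integral_pow_le_of_ae_abs_le h₄ N)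
  · exact hasSum_mul_cInt (hasSum_complexMGF_of_ae_abs_le hg.aemeasurable h₁ ζ)
      (hasSum_complexMGF_of_ae_abs_le hg.aemeasurable h₂ ζ)
      (hasSum_complexMGF_of_ae_abs_le hg.aemeasurable h₃ ζ)
      (hasSum_complexMGF_of_ae_abs_le hg.aemeasurable h₄ ζ)
  · exact norm_cInt_le (norm_complexMGF_mul_I_le hg.aemeasurable x)
      (norm_complexMGF_mul_I_le hg.aemeasurable x) (norm_complexMGF_mul_I_le hg.aemeasurable x)
      (norm_complexMGF_mul_I_le hg.aemeasurable x)

lemma cInt_eval_sumX_pow (t : ℂ) (N : ℕ) :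
    cInt μ₁ μ₂ μ₃ μ₄ (fun y => eval (fun k => (0 : Fin n → ℂ) k + t * y k) (sumX n ^ N))
      = t ^ N * cInt μ₁ μ₂ μ₃ μ₄ (fun y => ((∑ k, y k : ℝ) : ℂ) ^ N) := by
  rw [← cInt_const_mul]
  congr 1 with y
  simp [eval_sumX_pow, ← Finset.mul_sum, mul_pow]

end ComplexMeasure

lemma ae_abs_sum_le_of_measure_compl_closedBall_eq_zero {n : ℕ} {μ : Measure (Fin n → ℝ)}
    {R : ℝ} (hμ : μ (Metric.closedBall 0 R)ᶜ = 0) : ∀ᵐ y ∂μ, |∑ k, y k| ≤ n * R := by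
  filter_upwards [mem_ae_iff.mpr hμ] with y hy
  have hyk : ∀ k, |y k| ≤ R := fun k =>
    (norm_le_pi_norm y k).trans (mem_closedBall_zero_iff.mp hy)
  calc |∑ k, y k| ≤ ∑ k, |y k| := Finset.abs_sum_le_sum_abs _ _
    _ ≤ ∑ _k : Fin n, R := Finset.sum_le_sum fun k _ => hyk k
    _ = n * R := by simp

/-- For `p > 2`, a homogeneous operator `P(∂_z)` of order `p` (with `P(-i,…,-i) ≠ 0`)
and a function `m` of order `p`, there is no finite complex Borel measure `μ` of
compact support on `ℝⁿ` with
`∫ φ(z+ty) dμ(y) = Σ_j (P^j(∂_z)φ)(z) t^{pj}/m(j)` for all polynomials `φ`,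
all `z` and all small `t`. -/
theorem stmt13 {n p : ℕ} (hp : 2 < p) (P : MvPolynomial (Fin n) ℂ)
    (hP : P.IsHomogeneous p)
    (hP0 : MvPolynomial.eval (fun _ : Fin n => -Complex.I) P ≠ 0)
    (m : ℕ → ℝ)
    (hm : ∃ c C : ℝ, 0 < c ∧ 0 < C ∧ ∀ j : ℕ,
      c ^ j * Real.Gamma (1 + p * j) ≤ m j ∧ m j ≤ C ^ j * Real.Gamma (1 + p * j)) :
    ¬ ∃ (μ₁ μ₂ μ₃ μ₄ : Measure (Fin n → ℝ)) (R ε : ℝ),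
      IsFiniteMeasure μ₁ ∧ IsFiniteMeasure μ₂ ∧ IsFiniteMeasure μ₃ ∧ IsFiniteMeasure μ₄ ∧
      0 < R ∧
      μ₁ (Metric.closedBall 0 R)ᶜ = 0 ∧ μ₂ (Metric.closedBall 0 R)ᶜ = 0 ∧
      μ₃ (Metric.closedBall 0 R)ᶜ = 0 ∧ μ₄ (Metric.closedBall 0 R)ᶜ = 0 ∧
      0 < ε ∧
      ∀ (φ : MvPolynomial (Fin n) ℂ) (z : Fin n → ℂ) (t : ℂ), ‖t‖ < ε →
        HasSum
          (fun j : ℕ =>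
            MvPolynomial.eval z ((polyOp P)^[j] φ) * t ^ (p * j) / (m j : ℂ))
          (cInt μ₁ μ₂ μ₃ μ₄
            (fun y => MvPolynomial.eval (fun k => z k + t * (y k : ℂ)) φ)) := by
  rintro ⟨μ₁, μ₂, μ₃, μ₄, R, ε, _, _, _, _, -, h₁, h₂, h₃, h₄, hε, hyp⟩
  obtain ⟨c, C, hc, -, hm⟩ := hm
  have hA : eval (fun _ => (1 : ℂ)) P ≠ 0 := fun h => hP0 (by rw [hP.eval_const, h, mul_zero])
  have hm₁ : (m 1 : ℂ) ≠ 0 := by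
    have hlow := (hm 1).1
    simp only [pow_one, Nat.cast_one, mul_one] at hlow
    have hΓ : 0 < Real.Gamma (1 + p) := Real.Gamma_pos_of_pos (by positivity)
    exact_mod_cast ((mul_pos hc hΓ).trans_le hlow).ne'
  set t : ℂ := ((ε / 2 : ℝ) : ℂ)
  have ht : ‖t‖ < ε := by simp [t, abs_of_pos hε]; linarith
  have ht₀ : t ≠ 0 := by simp [t, hε.ne']
  set M : ℕ → ℂ := fun N => cInt μ₁ μ₂ μ₃ μ₄ (fun y => ((∑ k, y k : ℝ) : ℂ) ^ N)
  have hmoment : ∀ N, t ^ N * M N = if p ∣ N then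
      eval (fun _ => 1) P ^ (N / p) * N.factorial * t ^ N / m (N / p) else 0 := fun N =>
    (cInt_eval_sumX_pow t N).symm.trans ((hyp (sumX n ^ N) 0 t ht).unique
      (hasSum_eval_zero_iterate_polyOp_sumX_pow hP (by omega) m t N))
  have hMp : M p = 0 := cInt_pow_eq_zero_of_not_dvd (by fun_prop)
    (ae_abs_sum_le_of_measure_compl_closedBall_eq_zero h₁)
    (ae_abs_sum_le_of_measure_compl_closedBall_eq_zero h₂)
    (ae_abs_sum_le_of_measure_compl_closedBall_eq_zero h₃)
    (ae_abs_sum_le_of_measure_compl_closedBall_eq_zero h₄) hp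
    (fun N hN => (mul_eq_zero.mp ((hmoment N).trans (if_neg hN))).resolve_left
      (pow_ne_zero N ht₀)) (by omega)
  have hp_moment := hmoment p
  rw [hMp, mul_zero, if_pos dvd_rfl, Nat.div_self (by omega)] at hp_moment
  exact div_ne_zero (mul_ne_zero (mul_ne_zero (pow_ne_zero _ hA)
    (Nat.cast_ne_zero.mpr p.factorial_ne_zero)) (pow_ne_zero _ ht₀)) hm₁ hp_moment.symm
end
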